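/- The generating function F(x_1,x_2,x_3,q,t) = sum over all vectors (k_1,k_2,k_3) of nonnegative integers of C_{(k_1,k_2,k_3)}(q,t) x_1^{k_1} x_2^{k_2} x_3^{k_3} equals (1 - x_1 x_2 q t^2)(1 - x_1 x_2 q^2 t) divided by (1-x_2 q)(1-x_2 t)(1-x_1 q t)(1-x_1 t^2)(1-x_1 q^2)(1-x_1 x_2 q t)(1-x_3), as formal power series. -/

import Mathlib

/-- The Xin–Zhang bounce statistic of the `(k₁,k₂,k₃)`-Dyck path with red ranks
`(0, r₂, r₃)`:  `2(k₁-r₂) + r₂ + k₂ - r₃ - min(r₂,k₂)` if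
`r₂ + k₂ - r₃ ≥ 2 min(r₂,k₂)`, and `2(k₁-r₂) + ⌈(r₂+k₂-r₃)/2⌉` otherwise
(it does not involve `k₃`). -/
def bounceThree (k₁ k₂ r₂ r₃ : ℕ) : ℕ :=
  if r₃ + 2 * min r₂ k₂ ≤ r₂ + k₂ then
    2 * (k₁ - r₂) + (r₂ + k₂ - r₃ - min r₂ k₂)
  else
    2 * (k₁ - r₂) + (r₂ + k₂ - r₃ + 1) / 2

/-- The exponent vector of the monomial
`x₁^{k₁} x₂^{k₂} x₃^{k₃} q^{area} t^{bounce}` attached to a `(k₁,k₂,k₃)`-Dyck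
path, encoded as `p = (k₁,k₂,k₃,r₂,r₃)`; variables ordered `(x₁,x₂,x₃,q,t)`,
with `area = r₂ + r₃`. -/
noncomputable def expThree (p : Fin 5 → ℕ) : Fin 5 →₀ ℕ :=
  Finsupp.equivFunOnFinite.symm
    ![p 0, p 1, p 2, p 3 + p 4, bounceThree (p 0) (p 1) (p 3) (p 4)]

/-- The generating function
`F(x₁,x₂,x₃,q,t) = ∑_{k₁,k₂,k₃ ≥ 0} C_{(k₁,k₂,k₃)}(q,t) x₁^{k₁} x₂^{k₂} x₃^{k₃}`:
the coefficient of a monomial `d` counts the Dyck-path data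
`(k₁,k₂,k₃,r₂,r₃)` with `0 ≤ r₂ ≤ k₁`, `0 ≤ r₃ ≤ r₂ + k₂` and monomial `d`. -/
noncomputable def genFunThree : MvPowerSeries (Fin 5) ℤ :=
  fun d =>
    (Nat.card {p : Fin 5 → ℕ // p 3 ≤ p 0 ∧ p 4 ≤ p 3 + p 1 ∧ expThree p = d} : ℤ)

namespace XinZhangAux

open MvPowerSeries Finsupp

abbrev M5 := Fin 5 →₀ ℕ

noncomputable def mk5 (a b c d e : ℕ) : M5 := Finsupp.equivFunOnFinite.symm ![a, b, c, d, e]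

lemma mk5_apply (a b c d e : ℕ) (i : Fin 5) : mk5 a b c d e i = ![a, b, c, d, e] i := rfl

lemma mk5_eq_iff {a b c d e a' b' c' d' e' : ℕ} :
    mk5 a b c d e = mk5 a' b' c' d' e' ↔ a = a' ∧ b = b' ∧ c = c' ∧ d = d' ∧ e = e' := by
  constructor
  · intro h
    exact ⟨DFunLike.congr_fun h 0, DFunLike.congr_fun h 1, DFunLike.congr_fun h 2,
      DFunLike.congr_fun h 3, DFunLike.congr_fun h 4⟩
  · rintro ⟨rfl, rfl, rfl, rfl, rfl⟩; rfl

lemma mk5_add (a b c d e a' b' c' d' e' : ℕ) :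
    mk5 a b c d e + mk5 a' b' c' d' e' = mk5 (a+a') (b+b') (c+c') (d+d') (e+e') := by
  ext i
  rw [Finsupp.add_apply, mk5_apply, mk5_apply, mk5_apply]
  fin_cases i <;> rfl

lemma mk5_smul (k a b c d e : ℕ) :
    k • mk5 a b c d e = mk5 (k*a) (k*b) (k*c) (k*d) (k*e) := by
  ext i
  rw [Finsupp.smul_apply, mk5_apply, mk5_apply, smul_eq_mul]
  fin_cases i <;> rfl

lemma mk5_zero : mk5 0 0 0 0 0 = 0 := by
  ext i; rw [mk5_apply]; fin_cases i <;> rfl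

lemma mk5_eq_zero_iff {a b c d e : ℕ} :
    mk5 a b c d e = 0 ↔ a = 0 ∧ b = 0 ∧ c = 0 ∧ d = 0 ∧ e = 0 := by
  rw [← mk5_zero, mk5_eq_iff]

lemma mk5_eq_sum_single (a b c d e : ℕ) :
    mk5 a b c d e = single 0 a + single 1 b + single 2 c + single 3 d + single 4 e := by
  ext i
  rw [mk5_apply]
  fin_cases i <;> simp [Finsupp.single_apply]

lemma monomial_mk5 (a b c d e : ℕ) :
    (monomial (mk5 a b c d e) 1 : MvPowerSeries (Fin 5) ℤ)
      = X 0 ^ a * X 1 ^ b * X 2 ^ c * X 3 ^ d * X 4 ^ e := by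
  rw [X_pow_eq, X_pow_eq, X_pow_eq, X_pow_eq, X_pow_eq,
    monomial_mul_monomial, monomial_mul_monomial, monomial_mul_monomial,
    monomial_mul_monomial, mk5_eq_sum_single]
  norm_num

/-- The power series whose `d`-th coefficient counts the fiber of `ψ` over `d`. -/
noncomputable def countSeries {α : Type} (ψ : α → M5) : MvPowerSeries (Fin 5) ℤ :=
  fun d => (Nat.card {a // ψ a = d} : ℤ)

lemma coeff_countSeries {α : Type} (ψ : α → M5) (d : M5) :
    coeff d (countSeries ψ) = (Nat.card {a // ψ a = d} : ℤ) := rfl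

noncomputable def wnil (off : M5) : Unit → M5 := fun _ => off

noncomputable def wcons {α : Type} (g : M5) (ψ : α → M5) : ℕ × α → M5 :=
  fun p => p.1 • g + ψ p.2

lemma countSeries_wnil (off : M5) : countSeries (wnil off) = monomial off 1 := by
  apply MvPowerSeries.ext; intro d
  rw [coeff_countSeries, coeff_monomial]
  split_ifs with h
  · subst h
    have : Nat.card {a : Unit // wnil d a = d} = 1 := by
      apply Nat.card_eq_one_iff_unique.mpr
      exact ⟨⟨fun x y => Subtype.ext (Subsingleton.elim _ _)⟩, ⟨⟨⟨⟩, rfl⟩⟩⟩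
    rw [this]; norm_num
  · have : IsEmpty {a : Unit // wnil off a = d} := ⟨fun x => h (x.2.symm)⟩
    rw [Nat.card_of_isEmpty]; norm_num

lemma hfin_wnil (off : M5) : ∀ d, Finite {a : Unit // wnil off a = d} := fun _ => inferInstance

lemma hfin_wcons {α : Type} (g : M5) (hg : g ≠ 0) (ψ : α → M5)
    (hψ : ∀ d, Finite {a // ψ a = d}) : ∀ d, Finite {p : ℕ × α // wcons g ψ p = d} := by
  intro d
  obtain ⟨i, hi⟩ : ∃ i, g i ≠ 0 := by
    by_contra hc
    push_neg at hc
    exact hg (Finsupp.ext hc)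
  haveI : ∀ k : Fin (d i + 1), Finite {a // ψ a = d - (k : ℕ) • g} := fun k => hψ _
  set F : {p : ℕ × α // wcons g ψ p = d} →
      Σ k : Fin (d i + 1), {a // ψ a = d - (k : ℕ) • g} := fun x =>
    ⟨⟨x.1.1, by
      have h := DFunLike.congr_fun x.2 i
      simp only [wcons, Finsupp.add_apply, Finsupp.smul_apply, smul_eq_mul] at h
      have h2 : x.1.1 ≤ x.1.1 * g i := Nat.le_mul_of_pos_right _ (by omega)
      omega⟩,
     ⟨x.1.2, by
      have h := x.2
      rw [wcons] at h
      exact eq_tsub_of_add_eq (by rw [add_comm]; exact h)⟩⟩ with hF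
  apply Finite.of_injective F
  have : Function.Injective ((fun s : Σ k : Fin (d i + 1), {a // ψ a = d - (k : ℕ) • g} =>
      ((s.1 : ℕ), s.2.1)) ∘ F) := by
    have : ((fun s : Σ k : Fin (d i + 1), {a // ψ a = d - (k : ℕ) • g} =>
        ((s.1 : ℕ), s.2.1)) ∘ F) = fun x => x.1 := by
      funext x; rfl
    rw [this]
    exact Subtype.val_injective
  exact Function.Injective.of_comp this

/-- splitting equiv for the fiber of a `wcons`, when `g ≤ d`. -/
def wconsEquiv {α : Type} (g : M5) (ψ : α → M5) (d : M5) (hle : g ≤ d) :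
    {p : ℕ × α // wcons g ψ p = d} ≃
      {a // ψ a = d} ⊕ {p : ℕ × α // wcons g ψ p = d - g} where
  toFun x :=
    match x with
    | ⟨(0, a), h⟩ => Sum.inl ⟨a, by simpa [wcons] using h⟩
    | ⟨(k+1, a), h⟩ => Sum.inr ⟨(k, a), by
        apply eq_tsub_of_add_eq
        rw [wcons]
        simp only [wcons, succ_nsmul] at h
        rw [← h]; abel⟩
  invFun x :=
    match x with
    | Sum.inl ⟨a, h⟩ => ⟨(0, a), by simpa [wcons] using h⟩
    | Sum.inr ⟨(k, a), h⟩ => ⟨(k+1, a), by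
        rw [wcons] at h ⊢
        have h2 := tsub_add_cancel_of_le hle
        have : k • g + ψ a + g = d := by rw [h, h2]
        rw [← this, succ_nsmul]; abel⟩
  left_inv := by rintro ⟨⟨(_|k), a⟩, h⟩ <;> rfl
  right_inv := by rintro (⟨a, h⟩ | ⟨⟨k, a⟩, h⟩) <;> rfl

/-- when `¬ g ≤ d` every fiber element has first coordinate `0`. -/
def wconsEquiv' {α : Type} (g : M5) (ψ : α → M5) (d : M5) (hle : ¬ g ≤ d) :
    {p : ℕ × α // wcons g ψ p = d} ≃ {a // ψ a = d} where
  toFun x := ⟨x.1.2, by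
    obtain ⟨⟨k, a⟩, h⟩ := x
    match k with
    | 0 => simpa [wcons] using h
    | k+1 =>
      exfalso
      apply hle
      rw [← h, wcons]
      simp only [succ_nsmul]
      calc g ≤ g + ((k • g) + ψ a) := le_self_add
        _ = (k • g + g) + ψ a := by abel⟩
  invFun x := ⟨(0, x.1), by simpa [wcons] using x.2⟩
  left_inv := by
    rintro ⟨⟨(_|k), a⟩, h⟩
    · rfl
    · exfalso
      apply hle
      rw [← h, wcons]
      simp only [succ_nsmul]
      calc g ≤ g + ((k • g) + ψ a) := le_self_add
        _ = (k • g + g) + ψ a := by abel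
  right_inv := by rintro ⟨a, h⟩; rfl

lemma countSeries_wcons {α : Type} (g : M5) (ψ : α → M5)
    (hψ : ∀ d, Finite {a // ψ a = d})
    (hfin : ∀ d, Finite {p : ℕ × α // wcons g ψ p = d}) :
    countSeries (wcons g ψ) * (1 - monomial g 1) = countSeries ψ := by
  apply MvPowerSeries.ext; intro d
  rw [mul_sub, mul_one, map_sub, coeff_mul_monomial]
  by_cases hle : g ≤ d
  · rw [if_pos hle, mul_one, coeff_countSeries, coeff_countSeries, coeff_countSeries]
    haveI := hψ d
    haveI := hfin (d - g)
    have hcard : Nat.card {p : ℕ × α // wcons g ψ p = d}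
        = Nat.card {a // ψ a = d} + Nat.card {p : ℕ × α // wcons g ψ p = d - g} := by
      rw [Nat.card_congr (wconsEquiv g ψ d hle), Nat.card_sum]
    rw [hcard]
    push_cast
    ring
  · rw [if_neg hle, coeff_countSeries, coeff_countSeries]
    rw [Nat.card_congr (wconsEquiv' g ψ d hle)]
    ring

lemma peel {α : Type} (g : M5) (ψ : α → M5)
    (hψ : ∀ d, Finite {a // ψ a = d})
    (hfin : ∀ d, Finite {p : ℕ × α // wcons g ψ p = d})
    (R : MvPowerSeries (Fin 5) ℤ) :
    countSeries (wcons g ψ) * ((1 - monomial g 1) * R) = countSeries ψ * R := by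
  rw [← mul_assoc, countSeries_wcons g ψ hψ hfin]

-- the eight generators
noncomputable def gX3 : M5 := mk5 0 0 1 0 0
noncomputable def gAT2 : M5 := mk5 1 0 0 0 2
noncomputable def gQ : M5 := mk5 1 1 0 1 1
noncomputable def gP : M5 := mk5 0 1 0 1 0
noncomputable def gT : M5 := mk5 0 1 0 0 1
noncomputable def gA : M5 := mk5 1 1 0 3 0
noncomputable def gB : M5 := mk5 1 0 0 2 0
noncomputable def gC : M5 := mk5 1 0 0 1 1

lemma hgX3 : gX3 ≠ 0 := by simp [gX3, mk5_eq_zero_iff]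
lemma hgAT2 : gAT2 ≠ 0 := by simp [gAT2, mk5_eq_zero_iff]
lemma hgQ : gQ ≠ 0 := by simp [gQ, mk5_eq_zero_iff]
lemma hgP : gP ≠ 0 := by simp [gP, mk5_eq_zero_iff]
lemma hgT : gT ≠ 0 := by simp [gT, mk5_eq_zero_iff]
lemma hgA : gA ≠ 0 := by simp [gA, mk5_eq_zero_iff]
lemma hgB : gB ≠ 0 := by simp [gB, mk5_eq_zero_iff]
lemma hgC : gC ≠ 0 := by simp [gC, mk5_eq_zero_iff]

abbrev T5 := ℕ × ℕ × ℕ × ℕ × ℕ × Unit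
abbrev T4 := ℕ × ℕ × ℕ × ℕ × Unit
abbrev TT := T5 ⊕ T5 ⊕ T5 ⊕ T5 ⊕ T4 ⊕ T5 ⊕ T5
abbrev N5 := ℕ × ℕ × ℕ × ℕ × ℕ

noncomputable def ψ1 : T5 → M5 :=
  wcons gX3 (wcons gAT2 (wcons gQ (wcons gP (wcons gT (wnil (mk5 0 0 0 0 0))))))
noncomputable def ψ2 : T5 → M5 :=
  wcons gX3 (wcons gAT2 (wcons gA (wcons gP (wcons gQ (wnil (mk5 1 1 0 3 0))))))
noncomputable def ψ3 : T5 → M5 :=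
  wcons gX3 (wcons gAT2 (wcons gA (wcons gP (wcons gQ (wnil (mk5 1 1 0 2 1))))))
noncomputable def ψ4 : T5 → M5 :=
  wcons gX3 (wcons gAT2 (wcons gQ (wcons gB (wcons gC (wnil (mk5 1 0 0 2 0))))))
noncomputable def ψ5 : T4 → M5 :=
  wcons gX3 (wcons gAT2 (wcons gQ (wcons gC (wnil (mk5 1 0 0 1 1)))))
noncomputable def ψ6 : T5 → M5 :=
  wcons gX3 (wcons gAT2 (wcons gQ (wcons gA (wcons gB (wnil (mk5 2 1 0 5 0))))))
noncomputable def ψ7 : T5 → M5 :=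
  wcons gX3 (wcons gAT2 (wcons gQ (wcons gA (wcons gB (wnil (mk5 2 1 0 4 1))))))

noncomputable def Ψ : TT → M5 :=
  Sum.elim ψ1 (Sum.elim ψ2 (Sum.elim ψ3 (Sum.elim ψ4 (Sum.elim ψ5 (Sum.elim ψ6 ψ7)))))

noncomputable def Exp : N5 → M5
  | (k1, k2, k3, r2, r3) => mk5 k1 k2 k3 (r2 + r3) (bounceThree k1 k2 r2 r3)

def Cond : N5 → Prop
  | (k1, k2, _, r2, r3) => r2 ≤ k1 ∧ r3 ≤ r2 + k2

def toParam : N5 → TT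
  | (k1, k2, k3, r2, r3) =>
    if r2 ≤ k2 then
      if r3 ≤ k2 - r2 then .inl (k3, k1 - r2, r2, r3, k2 - r2 - r3, ())
      else if (r2 + k2 - r3) % 2 = 0 then
        .inr (.inl (k3, k1 - r2, r2 - 1 - (r2 + k2 - r3)/2, k2 - r2, (r2 + k2 - r3)/2, ()))
      else
        .inr (.inr (.inl (k3, k1 - r2, r2 - 1 - (r2 + k2 - r3)/2, k2 - r2, (r2 + k2 - r3)/2, ())))
    else
      if r3 = 0 then .inr (.inr (.inr (.inr (.inl (k3, k1 - r2, k2, r2 - k2 - 1, ())))))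
      else if r3 ≤ r2 - k2 then
        .inr (.inr (.inr (.inl (k3, k1 - r2, k2, r3 - 1, r2 - k2 - r3, ()))))
      else if (r2 + k2 - r3) % 2 = 0 then
        .inr (.inr (.inr (.inr (.inr (.inl (k3, k1 - r2, (r2 + k2 - r3)/2,
          k2 - 1 - (r2 + k2 - r3)/2, r2 - k2 - 1, ()))))))
      else
        .inr (.inr (.inr (.inr (.inr (.inr (k3, k1 - r2, (r2 + k2 - r3)/2,
          k2 - 1 - (r2 + k2 - r3)/2, r2 - k2 - 1, ()))))))

def fromParam : TT → N5
  | .inl (k3, a, u, v, w, _) => (u + a, u + v + w, k3, u, v)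
  | .inr (.inl (k3, a, u, w, c, _)) => (c + 1 + u + a, c + 1 + u + w, k3, c + 1 + u, 2 + 2*u + w)
  | .inr (.inr (.inl (k3, a, u, w, c, _))) =>
      (c + 1 + u + a, c + 1 + u + w, k3, c + 1 + u, 1 + 2*u + w)
  | .inr (.inr (.inr (.inl (k3, a, k, v, w, _)))) => (k + 1 + v + w + a, k, k3, k + 1 + v + w, 1 + v)
  | .inr (.inr (.inr (.inr (.inl (k3, a, k, w, _))))) => (k + 1 + w + a, k, k3, k + 1 + w, 0)
  | .inr (.inr (.inr (.inr (.inr (.inl (k3, a, c, w, u, _)))))) =>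
      (c + 2 + w + u + a, c + 1 + w, k3, c + 2 + w + u, 3 + 2*w + u)
  | .inr (.inr (.inr (.inr (.inr (.inr (k3, a, c, w, u, _)))))) =>
      (c + 2 + w + u + a, c + 1 + w, k3, c + 2 + w + u, 2 + 2*w + u)

lemma fromParam_cond : ∀ t : TT, Cond (fromParam t) := by
  rintro ((⟨k3,a,u,v,w,⟨⟩⟩)|(⟨k3,a,u,w,c,⟨⟩⟩)|(⟨k3,a,u,w,c,⟨⟩⟩)|(⟨k3,a,k,v,w,⟨⟩⟩)|(⟨k3,a,k,w,⟨⟩⟩)|(⟨k3,a,c,w,u,⟨⟩⟩)|(⟨k3,a,c,w,u,⟨⟩⟩)) <;>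
    exact ⟨by omega, by omega⟩

lemma param_left_inv : ∀ v : N5, Cond v → fromParam (toParam v) = v := by
  rintro ⟨k1, k2, k3, r2, r3⟩ ⟨h1, h2⟩
  simp only [toParam]
  split_ifs with c1 c2 c3 c4 c5 c6 <;>
    simp only [fromParam, Prod.mk.injEq, and_true, true_and] <;> omega

lemma param_right_inv : ∀ t : TT, toParam (fromParam t) = t := by
  rintro ((⟨k3,a,u,v,w,⟨⟩⟩)|(⟨k3,a,u,w,c,⟨⟩⟩)|(⟨k3,a,u,w,c,⟨⟩⟩)|(⟨k3,a,k,v,w,⟨⟩⟩)|(⟨k3,a,k,w,⟨⟩⟩)|(⟨k3,a,c,w,u,⟨⟩⟩)|(⟨k3,a,c,w,u,⟨⟩⟩)) <;>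
    · simp only [fromParam]; simp only [toParam]
      split_ifs <;>
        first
          | (exfalso; omega)
          | (simp only [Sum.inl.injEq, Sum.inr.injEq, Prod.mk.injEq, and_true, true_and]; omega)

lemma param_weight : ∀ t : TT, Ψ t = Exp (fromParam t) := by
  rintro ((⟨k3,a,u,v,w,⟨⟩⟩)|(⟨k3,a,u,w,c,⟨⟩⟩)|(⟨k3,a,u,w,c,⟨⟩⟩)|(⟨k3,a,k,v,w,⟨⟩⟩)|(⟨k3,a,k,w,⟨⟩⟩)|(⟨k3,a,c,w,u,⟨⟩⟩)|(⟨k3,a,c,w,u,⟨⟩⟩)) <;>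
    · simp only [Ψ, Sum.elim_inl, Sum.elim_inr, ψ1, ψ2, ψ3, ψ4, ψ5, ψ6, ψ7, wcons, wnil,
        gX3, gAT2, gQ, gP, gT, gA, gB, gC, mk5_smul, mk5_add, fromParam, Exp]
      rw [mk5_eq_iff]
      refine ⟨by omega, by omega, by omega, by omega, ?_⟩
      simp only [bounceThree]
      split_ifs <;> omega

/-- view a function `Fin 5 → ℕ` as a tuple -/
lemma eta5 (p : Fin 5 → ℕ) : ![p 0, p 1, p 2, p 3, p 4] = p := by
  funext i; fin_cases i <;> rfl

lemma exp_eq (p : Fin 5 → ℕ) : expThree p = Exp (p 0, p 1, p 2, p 3, p 4) := rfl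

def sumFiberEquiv {α β γ : Type*} (f : α → γ) (g : β → γ) (c : γ) :
    {x : α ⊕ β // Sum.elim f g x = c} ≃ {a // f a = c} ⊕ {b // g b = c} where
  toFun x :=
    match x with
    | ⟨.inl a, h⟩ => .inl ⟨a, h⟩
    | ⟨.inr b, h⟩ => .inr ⟨b, h⟩
  invFun x :=
    match x with
    | .inl ⟨a, h⟩ => ⟨.inl a, h⟩
    | .inr ⟨b, h⟩ => ⟨.inr b, h⟩
  left_inv := by rintro ⟨(a|b), h⟩ <;> rfl
  right_inv := by rintro (⟨a, h⟩ | ⟨b, h⟩) <;> rfl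

-- finiteness of the fibers of the seven cones
lemma hfin1 : ∀ d, Finite {x : T5 // ψ1 x = d} :=
  hfin_wcons gX3 hgX3 _ (hfin_wcons gAT2 hgAT2 _ (hfin_wcons gQ hgQ _
    (hfin_wcons gP hgP _ (hfin_wcons gT hgT _ (hfin_wnil _)))))
lemma hfin2 : ∀ d, Finite {x : T5 // ψ2 x = d} :=
  hfin_wcons gX3 hgX3 _ (hfin_wcons gAT2 hgAT2 _ (hfin_wcons gA hgA _
    (hfin_wcons gP hgP _ (hfin_wcons gQ hgQ _ (hfin_wnil _)))))
lemma hfin3 : ∀ d, Finite {x : T5 // ψ3 x = d} :=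
  hfin_wcons gX3 hgX3 _ (hfin_wcons gAT2 hgAT2 _ (hfin_wcons gA hgA _
    (hfin_wcons gP hgP _ (hfin_wcons gQ hgQ _ (hfin_wnil _)))))
lemma hfin4 : ∀ d, Finite {x : T5 // ψ4 x = d} :=
  hfin_wcons gX3 hgX3 _ (hfin_wcons gAT2 hgAT2 _ (hfin_wcons gQ hgQ _
    (hfin_wcons gB hgB _ (hfin_wcons gC hgC _ (hfin_wnil _)))))
lemma hfin5 : ∀ d, Finite {x : T4 // ψ5 x = d} :=
  hfin_wcons gX3 hgX3 _ (hfin_wcons gAT2 hgAT2 _ (hfin_wcons gQ hgQ _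
    (hfin_wcons gC hgC _ (hfin_wnil _))))
lemma hfin6 : ∀ d, Finite {x : T5 // ψ6 x = d} :=
  hfin_wcons gX3 hgX3 _ (hfin_wcons gAT2 hgAT2 _ (hfin_wcons gQ hgQ _
    (hfin_wcons gA hgA _ (hfin_wcons gB hgB _ (hfin_wnil _)))))
lemma hfin7 : ∀ d, Finite {x : T5 // ψ7 x = d} :=
  hfin_wcons gX3 hgX3 _ (hfin_wcons gAT2 hgAT2 _ (hfin_wcons gQ hgQ _
    (hfin_wcons gA hgA _ (hfin_wcons gB hgB _ (hfin_wnil _)))))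

/-- main decomposition of the generating function into the seven cones -/
lemma decomp : genFunThree =
    countSeries ψ1 + countSeries ψ2 + countSeries ψ3 + countSeries ψ4 +
      countSeries ψ5 + countSeries ψ6 + countSeries ψ7 := by
  apply MvPowerSeries.ext; intro d
  have hl : coeff d genFunThree
      = (Nat.card {p : Fin 5 → ℕ // p 3 ≤ p 0 ∧ p 4 ≤ p 3 + p 1 ∧ expThree p = d} : ℤ) := rfl
  rw [hl, map_add, map_add, map_add, map_add, map_add, map_add,
    coeff_countSeries, coeff_countSeries, coeff_countSeries, coeff_countSeries,
    coeff_countSeries, coeff_countSeries, coeff_countSeries]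
  -- equivalence between the path fiber and the tuple fiber
  have Ea : {p : Fin 5 → ℕ // p 3 ≤ p 0 ∧ p 4 ≤ p 3 + p 1 ∧ expThree p = d}
      ≃ {v : N5 // Cond v ∧ Exp v = d} :=
    { toFun := fun x => ⟨(x.1 0, x.1 1, x.1 2, x.1 3, x.1 4),
        ⟨⟨x.2.1, x.2.2.1⟩, by rw [← exp_eq]; exact x.2.2.2⟩⟩
      invFun := fun x => ⟨![x.1.1, x.1.2.1, x.1.2.2.1, x.1.2.2.2.1, x.1.2.2.2.2],
        by
          obtain ⟨⟨k1, k2, k3, r2, r3⟩, ⟨hc1, hc2⟩, he⟩ := x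
          exact ⟨hc1, hc2, he⟩⟩
      left_inv := fun x => Subtype.ext (eta5 x.1)
      right_inv := fun x => by
        obtain ⟨⟨k1, k2, k3, r2, r3⟩, h⟩ := x
        exact Subtype.ext rfl }
  have Eb : {v : N5 // Cond v ∧ Exp v = d} ≃ {t : TT // Ψ t = d} :=
    { toFun := fun x => ⟨toParam x.1, by
        rw [param_weight, param_left_inv x.1 x.2.1]; exact x.2.2⟩
      invFun := fun t => ⟨fromParam t.1, ⟨fromParam_cond t.1, by rw [← param_weight]; exact t.2⟩⟩
      left_inv := fun x => Subtype.ext (param_left_inv x.1 x.2.1)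
      right_inv := fun t => Subtype.ext (param_right_inv t.1) }
  have Ec := (Ea.trans Eb).trans
    ((sumFiberEquiv ψ1 _ d).trans (Equiv.sumCongr (Equiv.refl _)
      ((sumFiberEquiv ψ2 _ d).trans (Equiv.sumCongr (Equiv.refl _)
        ((sumFiberEquiv ψ3 _ d).trans (Equiv.sumCongr (Equiv.refl _)
          ((sumFiberEquiv ψ4 _ d).trans (Equiv.sumCongr (Equiv.refl _)
            ((sumFiberEquiv ψ5 _ d).trans (Equiv.sumCongr (Equiv.refl _)
              (sumFiberEquiv ψ6 ψ7 d)))))))))))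
  rw [Nat.card_congr Ec]
  haveI := hfin1 d; haveI := hfin2 d; haveI := hfin3 d; haveI := hfin4 d
  haveI := hfin5 d; haveI := hfin6 d; haveI := hfin7 d
  rw [Nat.card_sum, Nat.card_sum, Nat.card_sum, Nat.card_sum, Nat.card_sum, Nat.card_sum]
  push_cast
  ring


-- the seven cone identities
lemma S1_eq : countSeries ψ1 * ((1 - monomial gX3 1) * ((1 - monomial gAT2 1) *
      ((1 - monomial gQ 1) * ((1 - monomial gP 1) * (1 - monomial gT 1)))))
    = monomial (mk5 0 0 0 0 0) 1 := by
  have f0 := hfin_wnil (mk5 0 0 0 0 0)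
  have f1 := hfin_wcons gT hgT _ f0
  have f2 := hfin_wcons gP hgP _ f1
  have f3 := hfin_wcons gQ hgQ _ f2
  have f4 := hfin_wcons gAT2 hgAT2 _ f3
  rw [ψ1, peel gX3 _ f4 (hfin_wcons gX3 hgX3 _ f4), peel gAT2 _ f3 f4, peel gQ _ f2 f3,
    peel gP _ f1 f2, countSeries_wcons gT _ f0 f1, countSeries_wnil]

lemma S2_eq : countSeries ψ2 * ((1 - monomial gX3 1) * ((1 - monomial gAT2 1) *
      ((1 - monomial gA 1) * ((1 - monomial gP 1) * (1 - monomial gQ 1)))))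
    = monomial (mk5 1 1 0 3 0) 1 := by
  have f0 := hfin_wnil (mk5 1 1 0 3 0)
  have f1 := hfin_wcons gQ hgQ _ f0
  have f2 := hfin_wcons gP hgP _ f1
  have f3 := hfin_wcons gA hgA _ f2
  have f4 := hfin_wcons gAT2 hgAT2 _ f3
  rw [ψ2, peel gX3 _ f4 (hfin_wcons gX3 hgX3 _ f4), peel gAT2 _ f3 f4, peel gA _ f2 f3,
    peel gP _ f1 f2, countSeries_wcons gQ _ f0 f1, countSeries_wnil]

lemma S3_eq : countSeries ψ3 * ((1 - monomial gX3 1) * ((1 - monomial gAT2 1) *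
      ((1 - monomial gA 1) * ((1 - monomial gP 1) * (1 - monomial gQ 1)))))
    = monomial (mk5 1 1 0 2 1) 1 := by
  have f0 := hfin_wnil (mk5 1 1 0 2 1)
  have f1 := hfin_wcons gQ hgQ _ f0
  have f2 := hfin_wcons gP hgP _ f1
  have f3 := hfin_wcons gA hgA _ f2
  have f4 := hfin_wcons gAT2 hgAT2 _ f3
  rw [ψ3, peel gX3 _ f4 (hfin_wcons gX3 hgX3 _ f4), peel gAT2 _ f3 f4, peel gA _ f2 f3,
    peel gP _ f1 f2, countSeries_wcons gQ _ f0 f1, countSeries_wnil]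

lemma S4_eq : countSeries ψ4 * ((1 - monomial gX3 1) * ((1 - monomial gAT2 1) *
      ((1 - monomial gQ 1) * ((1 - monomial gB 1) * (1 - monomial gC 1)))))
    = monomial (mk5 1 0 0 2 0) 1 := by
  have f0 := hfin_wnil (mk5 1 0 0 2 0)
  have f1 := hfin_wcons gC hgC _ f0
  have f2 := hfin_wcons gB hgB _ f1
  have f3 := hfin_wcons gQ hgQ _ f2
  have f4 := hfin_wcons gAT2 hgAT2 _ f3
  rw [ψ4, peel gX3 _ f4 (hfin_wcons gX3 hgX3 _ f4), peel gAT2 _ f3 f4, peel gQ _ f2 f3,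
    peel gB _ f1 f2, countSeries_wcons gC _ f0 f1, countSeries_wnil]

lemma S5_eq : countSeries ψ5 * ((1 - monomial gX3 1) * ((1 - monomial gAT2 1) *
      ((1 - monomial gQ 1) * (1 - monomial gC 1))))
    = monomial (mk5 1 0 0 1 1) 1 := by
  have f0 := hfin_wnil (mk5 1 0 0 1 1)
  have f1 := hfin_wcons gC hgC _ f0
  have f2 := hfin_wcons gQ hgQ _ f1
  have f3 := hfin_wcons gAT2 hgAT2 _ f2
  rw [ψ5, peel gX3 _ f3 (hfin_wcons gX3 hgX3 _ f3), peel gAT2 _ f2 f3, peel gQ _ f1 f2,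
    countSeries_wcons gC _ f0 f1, countSeries_wnil]

lemma S6_eq : countSeries ψ6 * ((1 - monomial gX3 1) * ((1 - monomial gAT2 1) *
      ((1 - monomial gQ 1) * ((1 - monomial gA 1) * (1 - monomial gB 1)))))
    = monomial (mk5 2 1 0 5 0) 1 := by
  have f0 := hfin_wnil (mk5 2 1 0 5 0)
  have f1 := hfin_wcons gB hgB _ f0
  have f2 := hfin_wcons gA hgA _ f1
  have f3 := hfin_wcons gQ hgQ _ f2
  have f4 := hfin_wcons gAT2 hgAT2 _ f3
  rw [ψ6, peel gX3 _ f4 (hfin_wcons gX3 hgX3 _ f4), peel gAT2 _ f3 f4, peel gQ _ f2 f3,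
    peel gA _ f1 f2, countSeries_wcons gB _ f0 f1, countSeries_wnil]

lemma S7_eq : countSeries ψ7 * ((1 - monomial gX3 1) * ((1 - monomial gAT2 1) *
      ((1 - monomial gQ 1) * ((1 - monomial gA 1) * (1 - monomial gB 1)))))
    = monomial (mk5 2 1 0 4 1) 1 := by
  have f0 := hfin_wnil (mk5 2 1 0 4 1)
  have f1 := hfin_wcons gB hgB _ f0
  have f2 := hfin_wcons gA hgA _ f1
  have f3 := hfin_wcons gQ hgQ _ f2
  have f4 := hfin_wcons gAT2 hgAT2 _ f3
  rw [ψ7, peel gX3 _ f4 (hfin_wcons gX3 hgX3 _ f4), peel gAT2 _ f3 f4, peel gQ _ f2 f3,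
    peel gA _ f1 f2, countSeries_wcons gB _ f0 f1, countSeries_wnil]

end XinZhangAux


open MvPowerSeries in
/-- Xin–Zhang's formula: `F(x₁,x₂,x₃,q,t)` equals
`(1-x₁x₂qt²)(1-x₁x₂q²t) / ((1-x₂q)(1-x₂t)(1-x₁qt)(1-x₁t²)(1-x₁q²)(1-x₁x₂qt)(1-x₃))`
as formal power series, with `x₁ = X 0`, `x₂ = X 1`, `x₃ = X 2`, `q = X 3`, `t = X 4`. -/
theorem genFunThree_eq :
    genFunThree *
        ((1 - X 1 * X 3) * (1 - X 1 * X 4) * (1 - X 0 * X 3 * X 4) *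
          (1 - X 0 * X 4 ^ 2) * (1 - X 0 * X 3 ^ 2) *
          (1 - X 0 * X 1 * X 3 * X 4) * (1 - X 2)) =
      (1 - X 0 * X 1 * X 3 * X 4 ^ 2) * (1 - X 0 * X 1 * X 3 ^ 2 * X 4) := by
  have hA : (1 : MvPowerSeries (Fin 5) ℤ) - X 0 * X 1 * X 3 ^ 3 ≠ 0 := by
    intro h
    have h0 := congrArg (constantCoeff (σ := Fin 5) (R := ℤ)) h
    simp only [map_sub, map_one, map_mul, map_pow, constantCoeff_X, map_zero,
      mul_zero, zero_mul, zero_pow, sub_zero] at h0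
    exact one_ne_zero h0
  have h1 := XinZhangAux.S1_eq
  have h2 := XinZhangAux.S2_eq
  have h3 := XinZhangAux.S3_eq
  have h4 := XinZhangAux.S4_eq
  have h5 := XinZhangAux.S5_eq
  have h6 := XinZhangAux.S6_eq
  have h7 := XinZhangAux.S7_eq
  simp only [XinZhangAux.gX3, XinZhangAux.gAT2, XinZhangAux.gQ, XinZhangAux.gP,
    XinZhangAux.gT, XinZhangAux.gA, XinZhangAux.gB, XinZhangAux.gC,
    XinZhangAux.monomial_mk5, pow_zero, pow_one, one_mul, mul_one] at h1 h2 h3 h4 h5 h6 h7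
  rw [XinZhangAux.decomp]
  refine mul_right_cancel₀ hA ?_
  linear_combination
    ((1 - X 0 * X 1 * X 3 ^ 3) * (1 - X 0 * X 3 ^ 2) * (1 - X 0 * X 3 * X 4)) * h1 +
    ((1 - X 1 * X 4) * (1 - X 0 * X 3 ^ 2) * (1 - X 0 * X 3 * X 4)) * h2 +
    ((1 - X 1 * X 4) * (1 - X 0 * X 3 ^ 2) * (1 - X 0 * X 3 * X 4)) * h3 +
    ((1 - X 1 * X 3) * (1 - X 1 * X 4) * (1 - X 0 * X 1 * X 3 ^ 3)) * h4 +
    ((1 - X 1 * X 3) * (1 - X 1 * X 4) * (1 - X 0 * X 1 * X 3 ^ 3) * (1 - X 0 * X 3 ^ 2)) * h5 +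
    ((1 - X 1 * X 3) * (1 - X 1 * X 4) * (1 - X 0 * X 3 * X 4)) * h6 +
    ((1 - X 1 * X 3) * (1 - X 1 * X 4) * (1 - X 0 * X 3 * X 4)) * h7
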